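/- Let ν ∈ (−1,0) be a real number and let ℓ be a natural number. Let P_ℓ denote the Legendre polynomial of degree ℓ, given by the Rodrigues formula P_ℓ(t) = ((−1)^{ℓ}/(2^{ℓ}·ℓ!)) · ((d/dt)^{ℓ} (1−t²)^{ℓ})(t). Then 2π·∫_{−1}^{1} (2(1−t))^{ν/2}·P_ℓ(t) dt = 2^{ν+2}·π·(−ν/2)_{ℓ}·Γ((ν+2)/2) / Γ(ℓ+ν/2+2). -/

import Mathlib

/-!
Write `P_ℓ = c_ℓ · D^ℓ (1 - t²)^ℓ` and integrate by parts `ℓ` times against `(1 - t)^σ`,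
`σ = ν/2`. Since `D^j (1 - t²)^ℓ` is divisible by `(1 - t²)^(ℓ - j)`, every boundary term
vanishes and every intermediate integrand is `(1 - t)^σ` times a polynomial, hence integrable;
each step produces a factor `σ - i`, and their product is the Pochhammer symbol `(-σ)_ℓ` up to
sign. What is left is the beta integral `∫ (1 - t)^σ (1 + t)^ℓ = 2^(σ+ℓ+1) B(σ+1, ℓ+1)`, which
follows from the same integration by parts, by induction on `ℓ`.
-/

open MeasureTheory Set Polynomial Finset
open scoped Nat

theorem iteratedDeriv_eval_eq_iterate_derivative (p : ℝ[X]) (n : ℕ) :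
    iteratedDeriv n (fun x => p.eval x) = fun x => (derivative^[n] p).eval x := by
  induction n with
  | zero => simp
  | succ n ih =>
    funext x
    rw [iteratedDeriv_succ, ih, Function.iterate_succ_apply']
    exact Polynomial.deriv _

theorem Real.Gamma_add_nat_eq_prod_mul {x : ℝ} (hx : 0 < x) (n : ℕ) :
    Real.Gamma (x + n) = (∏ i ∈ range n, (x + i)) * Real.Gamma x := by
  induction n with
  | zero => simp
  | succ n ih =>
    rw [Nat.cast_succ, ← add_assoc, Real.Gamma_add_one (by positivity), ih, prod_range_succ]
    ring

section OneSubRpow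

variable {s : ℝ} {m : ℕ} {p : ℝ[X]}

theorem one_sub_rpow_mul_eval_one_sub_X_pow_mul {t : ℝ} (ht : t < 1) (s : ℝ) (m : ℕ)
    (q : ℝ[X]) :
    (1 - t) ^ s * ((1 - X) ^ m * q).eval t = (1 - t) ^ (s + m) * q.eval t := by
  rw [Real.rpow_add_natCast (by linarith)]
  simp [mul_assoc]

theorem intervalIntegrable_one_sub_rpow_mul_eval (hs : -1 < s + m) (hp : (1 - X) ^ m ∣ p) :
    IntervalIntegrable (fun t => (1 - t) ^ s * p.eval t) volume (-1) 1 := by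
  obtain ⟨q, rfl⟩ := hp
  have hint : IntervalIntegrable (fun t : ℝ => (1 - t) ^ (s + m)) volume (-1) 1 := by
    have h :=
      ((intervalIntegral.intervalIntegrable_rpow' (a := 0) (b := 2) hs).comp_sub_left 1).symm
    norm_num at h
    exact h
  refine (hint.mul_continuousOn q.continuous.continuousOn).congr_uIoo fun t ht => ?_
  rw [uIoo_of_le (by norm_num)] at ht
  exact (one_sub_rpow_mul_eval_one_sub_X_pow_mul ht.2 s m q).symm

theorem integral_one_sub_rpow_mul_eval_one_sub_X_pow_mul (s : ℝ) (m : ℕ) (q : ℝ[X]) :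
    ∫ t in (-1)..1, (1 - t) ^ s * ((1 - X) ^ m * q).eval t =
      ∫ t in (-1)..1, (1 - t) ^ (s + m) * q.eval t := by
  refine intervalIntegral.integral_congr_uIoo fun t ht => ?_
  rw [uIoo_of_le (by norm_num)] at ht
  exact one_sub_rpow_mul_eval_one_sub_X_pow_mul ht.2 s m q

theorem integral_one_sub_rpow_mul_derivative (hs : 0 < s + m) (hp : (1 - X) ^ m ∣ p)
    (hp₁ : p.eval (-1) = 0) :
    ∫ t in (-1)..1, (1 - t) ^ s * (derivative p).eval t =
      s * ∫ t in (-1)..1, (1 - t) ^ (s - 1) * p.eval t := by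
  obtain ⟨q, hq⟩ := hp
  -- `F` agrees with `(1 - t) ^ s * p.eval t` for `t < 1` and, unlike it, is continuous at `1`.
  set F : ℝ → ℝ := fun t => (1 - t) ^ (s + m) * q.eval t
  have hF_cont : ContinuousOn F (Icc (-1) 1) :=
    (((continuous_const.sub continuous_id).rpow_const fun _ => Or.inr hs.le).mul
      q.continuous).continuousOn
  have hF_deriv : ∀ t ∈ Ioo (-1 : ℝ) 1, HasDerivAt F
      (-(s * ((1 - t) ^ (s - 1) * p.eval t)) + (1 - t) ^ s * (derivative p).eval t) t := by
    intro t ht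
    have hG := (((hasDerivAt_id t).const_sub 1).rpow_const (p := s)
      (Or.inl (sub_ne_zero.2 ht.2.ne'))).mul (p.hasDerivAt t)
    refine (hG.congr_of_eventuallyEq ?_).congr_deriv (by simp; ring)
    filter_upwards [Iio_mem_nhds ht.2] with u hu
    rw [hq]
    exact (one_sub_rpow_mul_eval_one_sub_X_pow_mul hu s m q).symm
  have h₁ := intervalIntegrable_one_sub_rpow_mul_eval (s := s - 1) (by linarith) ⟨q, hq⟩
  have h₂ : IntervalIntegrable (fun t => (1 - t) ^ s * (derivative p).eval t) volume (-1) 1 := by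
    refine intervalIntegrable_one_sub_rpow_mul_eval (m := m - 1) ?_
      (pow_sub_one_dvd_derivative_of_pow_dvd ⟨q, hq⟩)
    rcases m with _ | m
    · simp at hs ⊢
      linarith
    · push_cast at hs ⊢
      linarith
  have h₀ : IntervalIntegrable (fun t => -(s * ((1 - t) ^ (s - 1) * p.eval t))) volume (-1) 1 :=
    (h₁.const_mul s).neg
  have hFTC := intervalIntegral.integral_eq_sub_of_hasDerivAt_of_le (by norm_num) hF_cont
    hF_deriv (h₀.add h₂)
  have hq₁ : q.eval (-1) = 0 := by
    simpa [hq, (by norm_num : (1 : ℝ) + 1 ≠ 0)] using hp₁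
  have hF₁ : F 1 = 0 := by simp [F, Real.zero_rpow hs.ne']
  have hF₀ : F (-1) = 0 := by simp [F, hq₁]
  rw [intervalIntegral.integral_add h₀ h₂, intervalIntegral.integral_neg,
    intervalIntegral.integral_const_mul, hF₁, hF₀] at hFTC
  linarith

end OneSubRpow

theorem integral_one_sub_rpow_mul_iterate_derivative_one_sub_X_sq_pow {σ : ℝ} (hσ : -1 < σ)
    {ℓ k : ℕ} (hk : k ≤ ℓ) :
    ∫ t in (-1)..1, (1 - t) ^ σ * (derivative^[ℓ] ((1 - X ^ 2) ^ ℓ)).eval t =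
      (∏ i ∈ range k, (σ - i)) *
        ∫ t in (-1)..1, (1 - t) ^ (σ - k) * (derivative^[ℓ - k] ((1 - X ^ 2) ^ ℓ)).eval t := by
  induction k with
  | zero => simp
  | succ k ih =>
    obtain ⟨r, hr⟩ :
        (1 - X ^ 2) ^ (k + 1) ∣ derivative^[ℓ - (k + 1)] ((1 - X ^ 2 : ℝ[X]) ^ ℓ) := by
      simpa [Nat.sub_sub_self hk] using
        pow_sub_dvd_iterate_derivative_pow (1 - X ^ 2 : ℝ[X]) ℓ (ℓ - (k + 1))
    have hdvd : (1 - X) ^ (k + 1) ∣ derivative^[ℓ - (k + 1)] ((1 - X ^ 2 : ℝ[X]) ^ ℓ) :=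
      hr ▸ (pow_dvd_pow_of_dvd ⟨1 + X, by ring⟩ _).mul_right r
    have hibp := integral_one_sub_rpow_mul_derivative (s := σ - k) (by push_cast; linarith) hdvd
      (by simp [hr])
    rw [← Function.iterate_succ_apply' derivative, show (ℓ - (k + 1)).succ = ℓ - k by omega]
      at hibp
    rw [ih (by omega), hibp, prod_range_succ]
    push_cast
    ring_nf

theorem integral_one_sub_rpow_mul_one_add_pow (n : ℕ) {a : ℝ} (ha : -1 < a) :
    ∫ t in (-1)..1, (1 - t) ^ a * (1 + t) ^ n =
      2 ^ (a + n + 1) * n ! * Real.Gamma (a + 1) / Real.Gamma (a + n + 2) := by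
  induction n generalizing a with
  | zero =>
    have h := intervalIntegral.integral_comp_sub_left (fun x : ℝ => x ^ a) (a := -1) (b := 1) 1
    norm_num at h
    simp only [pow_zero, mul_one, h, integral_rpow (Or.inl ha)]
    have ha₁ : 0 < a + 1 := by linarith
    rw [show a + (0 : ℕ) + 2 = a + 1 + 1 by push_cast; ring,
      Real.Gamma_add_one (s := a + 1) ha₁.ne', Real.zero_rpow ha₁.ne']
    have := Real.Gamma_pos_of_pos ha₁
    field_simp
    simp
  | succ n ih =>
    have hibp := integral_one_sub_rpow_mul_derivative (s := a + 1) (m := 0)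
      (p := (1 + X) ^ (n + 1)) (by simp; linarith) (by simp) (by simp)
    simp only [derivative_pow, eval_mul, eval_C, eval_pow, eval_add, eval_one, eval_X,
      derivative_add, derivative_one, derivative_X, add_sub_cancel_right, zero_add, mul_one,
      Nat.add_sub_cancel, mul_left_comm _ ((n + 1 : ℕ) : ℝ),
      intervalIntegral.integral_const_mul] at hibp
    have ha₁ : 0 < a + 1 := by linarith
    have hI : ∫ t in (-1)..1, (1 - t) ^ a * (1 + t) ^ (n + 1) =
        (n + 1) / (a + 1) * ∫ t in (-1)..1, (1 - t) ^ (a + 1) * (1 + t) ^ n := by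
      field_simp
      push_cast at hibp
      linarith
    rw [hI, ih (by linarith), Real.Gamma_add_one (s := a + 1) ha₁.ne', Nat.factorial_succ,
      show a + 1 + n + 1 = a + (n + 1 : ℕ) + 1 by push_cast; ring,
      show a + 1 + n + 2 = a + (n + 1 : ℕ) + 2 by push_cast; ring]
    push_cast
    field_simp

theorem prod_range_sub_natCast_eq_Gamma_div {x : ℝ} (hx : x < 0) (n : ℕ) :
    ∏ i ∈ range n, (x - i) = (-1) ^ n * (Real.Gamma (-x + n) / Real.Gamma (-x)) := by
  rw [Real.Gamma_add_nat_eq_prod_mul (neg_pos.2 hx),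
    mul_div_cancel_right₀ _ (Real.Gamma_pos_of_pos (neg_pos.2 hx)).ne',
    show (-1 : ℝ) ^ n = ∏ _ ∈ range n, (-1) by simp, ← prod_mul_distrib]
  exact prod_congr rfl fun i _ => by ring

theorem integral_one_sub_rpow_mul_iterate_derivative_one_sub_X_sq_pow_eq_Gamma {σ : ℝ}
    (hσ : σ ∈ Ioo (-1 : ℝ) 0) (ℓ : ℕ) :
    ∫ t in (-1)..1, (1 - t) ^ σ * (derivative^[ℓ] ((1 - X ^ 2) ^ ℓ)).eval t =
      (-1) ^ ℓ * (Real.Gamma (-σ + ℓ) / Real.Gamma (-σ)) *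
        (2 ^ (σ + ℓ + 1) * ℓ ! * Real.Gamma (σ + 1) / Real.Gamma (σ + ℓ + 2)) := by
  have hQ : (1 - X ^ 2 : ℝ[X]) ^ ℓ = (1 - X) ^ ℓ * (1 + X) ^ ℓ := by rw [← mul_pow]; ring
  rw [integral_one_sub_rpow_mul_iterate_derivative_one_sub_X_sq_pow hσ.1 le_rfl, Nat.sub_self,
    Function.iterate_zero_apply, hQ, integral_one_sub_rpow_mul_eval_one_sub_X_pow_mul,
    sub_add_cancel, prod_range_sub_natCast_eq_Gamma_div hσ.2]
  simp only [eval_pow, eval_add, eval_one, eval_X]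
  rw [integral_one_sub_rpow_mul_one_add_pow ℓ hσ.1]

/-- Let `ν ∈ (−1,0)`, `ℓ ∈ ℕ`, and let `P` be the Legendre polynomial of
degree `ℓ` given by the Rodrigues formula
`P t = ((−1)^ℓ/(2^ℓ·ℓ!)) · ((d/dt)^ℓ (1−t²)^ℓ)(t)`.  Then
`2π·∫_{−1}^{1} (2(1−t))^{ν/2}·P t dt
  = 2^{ν+2}·π·(−ν/2)_ℓ·Γ((ν+2)/2) / Γ(ℓ+ν/2+2)`,
where `(x)_ℓ = Γ(x+ℓ)/Γ(x)` is the Pochhammer symbol. -/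
theorem stmt_10 (ν : ℝ) (hν : ν ∈ Set.Ioo (-1 : ℝ) 0) (ℓ : ℕ)
    (P : ℝ → ℝ)
    (hP : ∀ t : ℝ, P t =
      (-1 : ℝ) ^ ℓ / (2 ^ ℓ * (Nat.factorial ℓ)) *
        iteratedDeriv ℓ (fun s : ℝ => (1 - s ^ 2) ^ ℓ) t) :
    2 * Real.pi * ∫ t in Set.Ioo (-1 : ℝ) 1, (2 * (1 - t)) ^ (ν / 2) * P t =
      2 ^ (ν + 2) * Real.pi * (Real.Gamma (-ν / 2 + ℓ) / Real.Gamma (-ν / 2)) *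
        Real.Gamma ((ν + 2) / 2) / Real.Gamma ((ℓ : ℝ) + ν / 2 + 2) := by
  have hrodrigues : (fun s : ℝ => (1 - s ^ 2) ^ ℓ) = fun s => ((1 - X ^ 2 : ℝ[X]) ^ ℓ).eval s := by
    funext s; simp
  have hIoo : ∫ t in Ioo (-1 : ℝ) 1, (2 * (1 - t)) ^ (ν / 2) * P t =
      2 ^ (ν / 2) * ((-1) ^ ℓ / (2 ^ ℓ * ℓ !)) *
        ∫ t in (-1)..1, (1 - t) ^ (ν / 2) * (derivative^[ℓ] ((1 - X ^ 2 : ℝ[X]) ^ ℓ)).eval t := by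
    rw [intervalIntegral.integral_of_le (by norm_num), integral_Ioc_eq_integral_Ioo,
      ← integral_const_mul]
    refine setIntegral_congr_fun measurableSet_Ioo fun t ht => ?_
    rw [hP, hrodrigues, iteratedDeriv_eval_eq_iterate_derivative,
      Real.mul_rpow zero_le_two (by linarith [ht.2])]
    ring
  have hσ : ν / 2 ∈ Ioo (-1 : ℝ) 0 := ⟨by linarith [hν.1], by linarith [hν.2]⟩
  have h2 : (2 : ℝ) ^ (ν / 2 + ℓ + 1) = 2 ^ (ν / 2) * 2 ^ ℓ * 2 := by
    rw [Real.rpow_add two_pos, Real.rpow_add_natCast two_ne_zero, Real.rpow_one]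
  have h2' : (2 : ℝ) ^ (ν + 2) = 2 ^ (ν / 2) * 2 ^ (ν / 2) * 4 := by
    rw [← Real.rpow_add two_pos, show ν / 2 + ν / 2 = ν by ring, Real.rpow_add two_pos]
    norm_num
  have hsign : ((-1 : ℝ) ^ ℓ) ^ 2 = 1 := by rw [← pow_mul, mul_comm, pow_mul]; norm_num
  rw [hIoo, integral_one_sub_rpow_mul_iterate_derivative_one_sub_X_sq_pow_eq_Gamma hσ ℓ, h2, h2',
    show -ν / 2 = -(ν / 2) by ring, show (ν + 2) / 2 = ν / 2 + 1 by ring,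
    show (ℓ : ℝ) + ν / 2 + 2 = ν / 2 + ℓ + 2 by ring]
  field_simp
  rw [hsign]
  ring
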